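/- Let 1 ≤ k and 2k ≤ n. Then for every 0 ≤ m ≤ k−1, f(n,k,k−m) ≤ (2/9)^{k−1−m} · f(n,k,1). -/

import Mathlib

/-- The Gaussian binomial coefficient `[n choose k]₂`, as a rational number. -/
def gbinomQ (n k : ℕ) : ℚ :=
  (∏ i ∈ Finset.range k, ((2 : ℚ) ^ (n - i) - 1)) /
    (∏ i ∈ Finset.range k, ((2 : ℚ) ^ (k - i) - 1))

/-- `f(n,k,m) = 2^{(k-m)²}·[n-k choose k-m]₂·[k choose m]₂`. -/
def fQ (n k m : ℕ) : ℚ := 2 ^ ((k - m) ^ 2) * gbinomQ (n - k) (k - m) * gbinomQ k m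

/-! Passing from `f(n,k,j)` to `f(n,k,j+1)` multiplies `f` by
`(2^{m+1}-1)² / (2^{2m+1}(2^{n-k-m}-1)(2^{k-m}-1))` with `m = k-j-1`, by the recurrence of the
Gaussian binomial coefficients in their lower index. For `1 ≤ j < k ≤ n - k` both factors
`2^{n-k-m}-1` and `2^{k-m}-1` are at least `3`, while `(2^{m+1}-1)² < 2·2^{2m+1}`, so the ratio
is at most `2/9`. -/

open Finset

section OrderedField

variable {K : Type*} [Field K] [LinearOrder K] [IsStrictOrderedRing K]

lemma two_pow_sub_one_nonneg (n : ℕ) : (0 : K) ≤ 2 ^ n - 1 :=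
  sub_nonneg.2 (one_le_pow₀ one_le_two)

lemma two_pow_sub_one_pos {n : ℕ} (hn : n ≠ 0) : (0 : K) < 2 ^ n - 1 :=
  sub_pos.2 (one_lt_pow₀ one_lt_two hn)

lemma three_le_two_pow_sub_one {n : ℕ} (hn : 2 ≤ n) : (3 : K) ≤ 2 ^ n - 1 := by
  have : (2 : K) ^ 2 ≤ 2 ^ n := pow_le_pow_right₀ one_le_two hn
  linarith

lemma two_pow_sq_mul_div_le {m s t : ℕ} (hs : 2 ≤ s) (ht : 2 ≤ t) :
    (2 : K) ^ (m ^ 2) * (2 ^ (m + 1) - 1) / (2 ^ t - 1) ≤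
      2 / 9 * 2 ^ ((m + 1) ^ 2) * (2 ^ s - 1) / (2 ^ (m + 1) - 1) := by
  set x : K := 2 ^ (m + 1)
  have hx : 1 ≤ x := one_le_pow₀ one_le_two
  have hpow : 2 * (2 : K) ^ ((m + 1) ^ 2) = 2 ^ (m ^ 2) * x ^ 2 := by
    rw [← pow_mul, ← pow_succ', ← pow_add]
    congr 1
    ring
  have hac : 9 ≤ ((2 : K) ^ s - 1) * (2 ^ t - 1) := by
    nlinarith [three_le_two_pow_sub_one (K := K) hs, three_le_two_pow_sub_one (K := K) ht]
  rw [div_le_div_iff₀ (two_pow_sub_one_pos (by omega)) (two_pow_sub_one_pos (by omega))]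
  calc (2 : K) ^ (m ^ 2) * (x - 1) * (x - 1)
      ≤ 2 ^ (m ^ 2) * x ^ 2 := by
        rw [mul_assoc]
        exact mul_le_mul_of_nonneg_left (by nlinarith) (by positivity)
    _ ≤ 2 ^ (m ^ 2) * x ^ 2 * (((2 : K) ^ s - 1) * (2 ^ t - 1) / 9) :=
        le_mul_of_one_le_right (by positivity) (by rw [one_le_div₀ (by norm_num)]; exact hac)
    _ = 2 / 9 * 2 ^ ((m + 1) ^ 2) * (2 ^ s - 1) * (2 ^ t - 1) := by rw [← hpow]; ring

end OrderedField

lemma gbinomQ_nonneg (n k : ℕ) : 0 ≤ gbinomQ n k :=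
  div_nonneg (prod_nonneg fun _ _ ↦ two_pow_sub_one_nonneg _)
    (prod_nonneg fun _ _ ↦ two_pow_sub_one_nonneg _)

lemma gbinomQ_succ (n k : ℕ) :
    gbinomQ n (k + 1) = gbinomQ n k * (2 ^ (n - k) - 1) / (2 ^ (k + 1) - 1) := by
  rw [gbinomQ, gbinomQ, prod_range_succ, prod_range_succ']
  simp only [Nat.add_sub_add_right, Nat.sub_zero]
  rw [mul_div_mul_comm, mul_div_assoc]

lemma fQ_succ_le {n k j : ℕ} (hj : 1 ≤ j) (hjk : j < k) (hn : 2 * k ≤ n) :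
    fQ n k (j + 1) ≤ 2 / 9 * fQ n k j := by
  obtain ⟨m, rfl⟩ : ∃ m, k = j + 1 + m := ⟨k - (j + 1), by omega⟩
  have hm : j + 1 + m - (j + 1) = m := by omega
  have hm' : j + 1 + m - j = m + 1 := by omega
  rw [fQ, fQ, hm, hm', gbinomQ_succ (n - _) m, gbinomQ_succ (j + 1 + m) j, hm']
  have key := two_pow_sq_mul_div_le (K := ℚ) (m := m) (s := n - (j + 1 + m) - m) (t := j + 1)
    (by omega) (by omega)
  have hX := mul_nonneg (gbinomQ_nonneg (n - (j + 1 + m)) m) (gbinomQ_nonneg (j + 1 + m) j)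
  calc _ = gbinomQ (n - (j + 1 + m)) m * gbinomQ (j + 1 + m) j *
        (2 ^ (m ^ 2) * (2 ^ (m + 1) - 1) / (2 ^ (j + 1) - 1)) := by ring
    _ ≤ gbinomQ (n - (j + 1 + m)) m * gbinomQ (j + 1 + m) j *
        (2 / 9 * 2 ^ ((m + 1) ^ 2) * (2 ^ (n - (j + 1 + m) - m) - 1) / (2 ^ (m + 1) - 1)) :=
      mul_le_mul_of_nonneg_left key hX
    _ = _ := by ring

lemma fQ_le_pow_mul_fQ_one_of_le {n k j : ℕ} (hn : 2 * k ≤ n) (hj : 1 ≤ j) (hjk : j ≤ k) :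
    fQ n k j ≤ (2 / 9 : ℚ) ^ (j - 1) * fQ n k 1 := by
  induction j, hj using Nat.le_induction with
  | base => simp
  | succ j hj ih =>
    calc fQ n k (j + 1) ≤ 2 / 9 * fQ n k j := fQ_succ_le hj (by omega) hn
      _ ≤ 2 / 9 * ((2 / 9) ^ (j - 1) * fQ n k 1) := by gcongr; exact ih (by omega)
      _ = (2 / 9 : ℚ) ^ (j + 1 - 1) * fQ n k 1 := by
        rw [← mul_assoc, ← pow_succ', Nat.sub_add_cancel hj, Nat.add_sub_cancel]

theorem fQ_le_pow_mul_fQ_one {n k : ℕ} (hk : 1 ≤ k) (hn : 2 * k ≤ n) :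
    ∀ m ≤ k - 1, fQ n k (k - m) ≤ (2 / 9 : ℚ) ^ (k - 1 - m) * fQ n k 1 := by
  intro m hm
  rw [show k - 1 - m = k - m - 1 by omega]
  exact fQ_le_pow_mul_fQ_one_of_le hn (by omega) (by omega)
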